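/- A shift-deterministic payoff φ: A^ω → ℝ is prefix-monotone if and only if for every letter a ∈ A the induced shift map s[a]: φ(A^ω) → φ(A^ω), defined by s[a](φ(β)) = φ(aβ), is non-decreasing. -/
import Mathlib


open Filter Topology

/-- Concatenation of a finite word with an infinite word. -/
def wcat {A : Type*} (u : List A) (β : ℕ → A) : ℕ → A :=
  fun n => if h : n < u.length then u.get ⟨n, h⟩ else β (n - u.length)

/-- A payoff is prefix-monotone if there are no finite words `u, v` and infinite words
`β, γ` with `φ(uβ) > φ(uγ)` and `φ(vβ) < φ(vγ)`. -/
def PrefixMonotone {A : Type*} (φ : (ℕ → A) → ℝ) : Prop :=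
  ¬ ∃ (u v : List A) (β γ : ℕ → A),
      φ (wcat u β) > φ (wcat u γ) ∧ φ (wcat v β) < φ (wcat v γ)

/-- A payoff is shift-deterministic if `φ(β) = φ(γ)` implies `φ(aβ) = φ(aγ)`. -/
def ShiftDet {A : Type*} (φ : (ℕ → A) → ℝ) : Prop :=
  ∀ (a : A) (β γ : ℕ → A), φ β = φ γ → φ (wcat [a] β) = φ (wcat [a] γ)


lemma wcat_nil {A : Type*} (β : ℕ → A) : wcat ([] : List A) β = β := by
  funext n; simp [wcat]

lemma wcat_cons {A : Type*} (a : A) (u : List A) (β : ℕ → A) :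
    wcat (a :: u) β = wcat [a] (wcat u β) := by
  funext n
  cases n with
  | zero => simp [wcat]
  | succ m =>
    by_cases h : m < u.length
    · simp [wcat, h, Nat.succ_lt_succ h]
    · have h' : ¬ m + 1 < u.length + 1 := by omega
      simp [wcat, h, h', Nat.succ_sub_succ]

/-- For a shift-deterministic payoff, prefix-monotonicity is equivalent to each induced
shift map `s[a] : φ(A^ω) → φ(A^ω)`, `s[a](φ β) = φ(aβ)`, being non-decreasing. -/
theorem prefixMonotone_iff_shift_maps_monotone
    {A : Type*} [Fintype A] [Nonempty A]
    (φ : (ℕ → A) → ℝ) (hsd : ShiftDet φ) :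
    PrefixMonotone φ ↔
      ∀ (a : A) (β γ : ℕ → A), φ β ≤ φ γ → φ (wcat [a] β) ≤ φ (wcat [a] γ) := by
  constructor
  · intro hpm a β γ hle
    rcases eq_or_lt_of_le hle with h | h
    · exact le_of_eq (hsd a β γ h)
    · by_contra hgt
      exact hpm ⟨[a], [], β, γ, lt_of_not_ge hgt, by simpa [wcat_nil] using h⟩
  · intro hmono
    have key : ∀ (u : List A) (β γ : ℕ → A), φ β ≤ φ γ → φ (wcat u β) ≤ φ (wcat u γ) := by
      intro u
      induction u with
      | nil => intro β γ h; simpa [wcat_nil] using h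
      | cons a t ih =>
        intro β γ h
        rw [wcat_cons a t β, wcat_cons a t γ]
        exact hmono a _ _ (ih β γ h)
    rintro ⟨u, v, β, γ, h1, h2⟩
    rcases le_total (φ β) (φ γ) with h | h
    · exact absurd (key u β γ h) (not_le.mpr h1)
    · exact absurd (key v γ β h) (not_le.mpr h2)
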